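/- For every modal formula A in the language with □ containing at most the propositional variable p: A is valid in all GL-models (Kripke models with transitive, conversely well-founded accessibility relation) if and only if A† is valid in all Veltman models. -/
import Mathlib


/-- Formulas of the modal language with a single unary modality `□`.
Variable number `0` plays the role of the propositional variable `p`. -/
inductive GLForm : Type
  | bot : GLForm
  | var : ℕ → GLForm
  | imp : GLForm → GLForm → GLForm
  | box : GLForm → GLForm

namespace GLForm

/-- `¬A` abbreviates `A → ⊥`. -/
def neg (A : GLForm) : GLForm := A.imp .bot

/-- `⊤` abbreviates `¬⊥`. -/
def top : GLForm := neg .bot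

/-- `◇A` abbreviates `¬□¬A`. -/
def dia (A : GLForm) : GLForm := (A.neg.box).neg

/-- `A` contains at most the propositional variable `p` (i.e. variable number `0`). -/
def onlyP : GLForm → Prop
  | bot => True
  | var n => n = 0
  | imp A B => A.onlyP ∧ B.onlyP
  | box A => A.onlyP

end GLForm

/-- Formulas of the interpretability language: a unary modality `□` and a
binary modality `▷`. -/
inductive ILForm : Type
  | bot : ILForm
  | var : ℕ → ILForm
  | imp : ILForm → ILForm → ILForm
  | box : ILForm → ILForm
  | rhd : ILForm → ILForm → ILForm

namespace ILForm

/-- `¬A` abbreviates `A → ⊥`. -/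
def neg (A : ILForm) : ILForm := A.imp .bot

/-- `⊤` abbreviates `¬⊥`. -/
def top : ILForm := neg .bot

/-- `◇A` abbreviates `¬□¬A`. -/
def dia (A : ILForm) : ILForm := (A.neg.box).neg

end ILForm

/-- The translation of the variable `p`: the formula `◇◇⊤ → (⊤ ▷ ◇⊤)`. -/
def pDag : ILForm := (ILForm.top.dia.dia).imp (ILForm.top.rhd ILForm.top.dia)

/-- The translation `†` of one-variable `GL`-formulas into closed `IL`-formulas:
`⊥† = ⊥`, `p† = ◇◇⊤ → (⊤ ▷ ◇⊤)`, `(A→B)† = A† → B†`, `(□A)† = □(◇◇⊤ → A†)`. -/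
def dag : GLForm → ILForm
  | .bot => .bot
  | .var _ => pDag
  | .imp A B => (dag A).imp (dag B)
  | .box A => ((ILForm.top.dia.dia).imp (dag A)).box

/-- Kripke forcing for the language with `□`, over a frame `(W, R)` with
valuation `v` (variable number `0` is the variable `p`). -/
def KSat {W : Type} (R : W → W → Prop) (v : W → ℕ → Prop) : W → GLForm → Prop
  | x, .bot => False
  | x, .var n => v x n
  | x, .imp A B => KSat R v x A → KSat R v x B
  | x, .box A => ∀ y, R x y → KSat R v y A

/-- Veltman forcing for the interpretability language, over `(W, R, S)` with
valuation `v`:  `x ⊩ □A` iff every `R`-successor of `x` forces `A`, and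
`x ⊩ A ▷ B` iff every `R`-successor of `x` forcing `A` has an `S x`-successor
forcing `B`. -/
def ILSat {W : Type} (R : W → W → Prop) (S : W → W → W → Prop)
    (v : W → ℕ → Prop) : W → ILForm → Prop
  | x, .bot => False
  | x, .var n => v x n
  | x, .imp A B => ILSat R S v x A → ILSat R S v x B
  | x, .box A => ∀ y, R x y → ILSat R S v y A
  | x, .rhd A B => ∀ y, R x y → ILSat R S v y A → ∃ z, S x y z ∧ ILSat R S v z B

/-- A `GL`-model: a Kripke model whose accessibility relation is transitive
and conversely well-founded. -/
structure GLModel where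
  W : Type
  nonempty : Nonempty W
  R : W → W → Prop
  val : W → ℕ → Prop
  trans : Transitive R
  cwf : WellFounded (Function.swap R)

/-- A Veltman model (`IL`-model): `R` is transitive and conversely
well-founded, each `S x` is transitive, reflexive on the `R`-successors of
`x`, relates only `R`-successors of `x`, and contains `R` restricted to the
`R`-successors of `x`. -/
structure VeltmanModel where
  W : Type
  nonempty : Nonempty W
  R : W → W → Prop
  S : W → W → W → Prop
  val : W → ℕ → Prop
  R_trans : Transitive R
  R_cwf : WellFounded (Function.swap R)
  S_trans : ∀ x, Transitive (S x)
  S_refl : ∀ x y, R x y → S x y y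
  S_dom : ∀ x y z, S x y z → R x y ∧ R x z
  S_of_R : ∀ x y z, R x y → R y z → S x y z


section DagAux

/-- `x` has an `R`-successor which itself has a successor (i.e. `x` forces `◇◇⊤`). -/
def Deep {W : Type} (R : W → W → Prop) (x : W) : Prop := ∃ y, R x y ∧ ∃ z, R y z

lemma ilsat_top {W : Type} {R : W → W → Prop} {S : W → W → W → Prop}
    {v : W → ℕ → Prop} {x : W} : ILSat R S v x ILForm.top := by
  simp [ILForm.top, ILForm.neg, ILSat]

lemma ilsat_dia {W : Type} {R : W → W → Prop} {S : W → W → W → Prop}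
    {v : W → ℕ → Prop} {x : W} {C : ILForm} :
    ILSat R S v x C.dia ↔ ∃ y, R x y ∧ ILSat R S v y C := by
  simp only [ILForm.dia, ILForm.neg, ILSat]
  constructor
  · intro h
    by_contra hc
    push_neg at hc
    exact h fun y hy hC => hc y hy hC
  · rintro ⟨y, hy, hC⟩ h
    exact h y hy hC

lemma ilsat_dd {W : Type} {R : W → W → Prop} {S : W → W → W → Prop}
    {v : W → ℕ → Prop} {x : W} :
    ILSat R S v x (ILForm.top.dia.dia) ↔ Deep R x := by
  constructor
  · intro h
    obtain ⟨y, hy, hC⟩ := ilsat_dia.mp h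
    obtain ⟨z, hz, -⟩ := ilsat_dia.mp hC
    exact ⟨y, hy, z, hz⟩
  · rintro ⟨y, hy, z, hz⟩
    exact ilsat_dia.mpr ⟨y, hy, ilsat_dia.mpr ⟨z, hz, ilsat_top⟩⟩

/-! ### Easy direction: from a Veltman model to a GL model -/

lemma transfer1 (M : VeltmanModel) (B : GLForm) (x : M.W) :
    ILSat M.R M.S M.val x (dag B) ↔
      KSat (fun a b => M.R a b ∧ Deep M.R b)
        (fun a _ => ILSat M.R M.S M.val a pDag) x B := by
  induction B generalizing x with
  | bot => simp [dag, KSat, ILSat]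
  | var n => simp [dag, KSat]
  | imp C D ihC ihD => simp only [dag, KSat, ILSat, ihC, ihD]
  | box C ihC =>
    simp only [dag, KSat, ILSat]
    constructor
    · rintro h y ⟨hy, hd⟩
      exact (ihC y).mp (h y hy ((ilsat_dd (S := M.S) (v := M.val)).mpr hd))
    · intro h y hy hdd
      exact (ihC y).mpr
        (h y ⟨hy, (ilsat_dd (S := M.S) (v := M.val) (x := y)).mp hdd⟩)

/-! ### Hard direction: from a GL model to a Veltman model -/

variable (N : GLModel)

/-- Accessibility on `N.W × Fin 3`: each world gets a two-element tail, and
worlds with second component `0` see all copies of their `R`-successors. -/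
def R2 : (N.W × Fin 3) → (N.W × Fin 3) → Prop :=
  fun a b => (a.1 = b.1 ∧ a.2 < b.2) ∨ (N.R a.1 b.1 ∧ a.2 = 0)

/-- `S x` is maximal when `p` holds at `x`, minimal otherwise. -/
def S2 : (N.W × Fin 3) → (N.W × Fin 3) → (N.W × Fin 3) → Prop :=
  fun x y z => R2 N x y ∧ R2 N x z ∧ (y = z ∨ R2 N y z ∨ (x.2 = 0 ∧ N.val x.1 0))

def v2 : (N.W × Fin 3) → ℕ → Prop := fun _ _ => False

lemma R2_trans : Transitive (R2 N) := by
  rintro ⟨w, i⟩ ⟨u, j⟩ ⟨t, k⟩ h1 h2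
  rcases h1 with ⟨rfl, hij⟩ | ⟨hr, hi⟩ <;>
    rcases h2 with ⟨rfl, hjk⟩ | ⟨hr2, hj⟩
  · exact Or.inl ⟨rfl, lt_trans hij hjk⟩
  · subst hj; exact absurd hij (by simp)
  · exact Or.inr ⟨hr, hi⟩
  · exact Or.inr ⟨N.trans hr hr2, hi⟩

lemma fin_gt_wf : WellFounded (fun a b : Fin 3 => b < a) := by
  have : Subrelation (fun a b : Fin 3 => b < a)
      (InvImage Nat.lt (fun i : Fin 3 => 2 - i.val)) := by
    intro a b h
    have ha := a.isLt
    have hb := b.isLt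
    have hba : b.val < a.val := h
    show 2 - a.val < 2 - b.val
    omega
  exact this.wf (InvImage.wf _ Nat.lt_wfRel.wf)

lemma R2_cwf : WellFounded (Function.swap (R2 N)) := by
  have : Subrelation (Function.swap (R2 N))
      (Prod.Lex (Function.swap N.R) (fun a b : Fin 3 => b < a)) := by
    rintro ⟨u, j⟩ ⟨w, i⟩ h
    rcases h with ⟨heq, hlt⟩ | ⟨hr, -⟩
    · cases heq; exact Prod.Lex.right _ hlt
    · exact Prod.Lex.left _ _ hr
  exact this.wf (WellFounded.prod_lex N.cwf fin_gt_wf)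

lemma not_R2_two (w : N.W) (a : N.W × Fin 3) : ¬ R2 N (w, 2) a := by
  rintro (⟨-, hlt⟩ | ⟨-, h0⟩)
  · have h1 := a.2.isLt
    have h2 : (2 : Fin 3).val < a.2.val := hlt
    omega
  · exact absurd h0 (show ¬ (2 : Fin 3) = 0 by decide)

lemma deep2 (w : N.W) (i : Fin 3) : Deep (R2 N) (w, i) ↔ i = 0 := by
  constructor
  · rintro ⟨⟨u, j⟩, h1, ⟨t, k⟩, h2⟩
    by_contra hi
    have hi' : i.val ≠ 0 := fun h => hi (Fin.ext h)
    rcases h1 with ⟨rfl, hij⟩ | ⟨-, h0⟩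
    · rcases h2 with ⟨rfl, hjk⟩ | ⟨-, h0⟩
      · have hk := k.isLt
        have e1 : i.val < j.val := hij
        have e2 : j.val < k.val := hjk
        omega
      · have e1 : i.val < j.val := hij
        have e2 : j.val = 0 := Fin.val_eq_of_eq h0
        omega
    · exact hi h0
  · rintro rfl
    exact ⟨(w, 1), Or.inl ⟨rfl, show (0 : Fin 3) < 1 by decide⟩,
           (w, 2), Or.inl ⟨rfl, show (1 : Fin 3) < 2 by decide⟩⟩

lemma pdag2 (w : N.W) :
    ILSat (R2 N) (S2 N) (v2 N) (w, 0) pDag ↔ N.val w 0 := by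
  have hdd : ILSat (R2 N) (S2 N) (v2 N) (w, 0) (ILForm.top.dia.dia) :=
    ilsat_dd.mpr ((deep2 N w 0).mpr rfl)
  constructor
  · intro h
    have hrhd := h hdd
    obtain ⟨z, hS, hdia⟩ :=
      hrhd (w, 2) (Or.inl ⟨rfl, show (0 : Fin 3) < 2 by decide⟩) ilsat_top
    obtain ⟨-, -, hc⟩ := hS
    rcases hc with rfl | hR | ⟨-, hv⟩
    · obtain ⟨y, hy, -⟩ := ilsat_dia.mp hdia
      exact absurd hy (not_R2_two N w y)
    · exact absurd hR (not_R2_two N w z)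
    · exact hv
  · intro hv _ y hy _
    refine ⟨(w, 1), ⟨hy, Or.inl ⟨rfl, show (0 : Fin 3) < 1 by decide⟩,
      Or.inr (Or.inr ⟨rfl, hv⟩)⟩, ?_⟩
    exact ilsat_dia.mpr
      ⟨(w, 2), Or.inl ⟨rfl, show (1 : Fin 3) < 2 by decide⟩, ilsat_top⟩

lemma transfer2 (B : GLForm) (hB : B.onlyP) (w : N.W) :
    ILSat (R2 N) (S2 N) (v2 N) (w, 0) (dag B) ↔ KSat N.R N.val w B := by
  induction B generalizing w with
  | bot => simp [dag, KSat, ILSat]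
  | var n =>
    have hn : n = 0 := hB
    subst hn
    simpa [dag, KSat] using pdag2 N w
  | imp C D ihC ihD =>
    obtain ⟨h1, h2⟩ := hB
    simp only [dag, KSat, ILSat, ihC h1, ihD h2]
  | box C ihC =>
    simp only [dag, KSat, ILSat]
    constructor
    · intro h u hu
      exact (ihC hB u).mp
        (h (u, 0) (Or.inr ⟨hu, rfl⟩)
          ((ilsat_dd (S := S2 N) (v := v2 N)).mpr ((deep2 N u 0).mpr rfl)))
    · intro h y hy hdd
      obtain ⟨u, j⟩ := y
      have hj : j = 0 :=
        (deep2 N u j).mp ((ilsat_dd (S := S2 N) (v := v2 N)).mp hdd)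
      subst hj
      rcases hy with ⟨rfl, hlt⟩ | ⟨hr, -⟩
      · exact absurd hlt (lt_irrefl _)
      · exact (ihC hB u).mpr (h u hr)

/-- The Veltman model built from a GL model. -/
def M2 : VeltmanModel where
  W := N.W × Fin 3
  nonempty := N.nonempty.elim fun w => ⟨(w, 0)⟩
  R := R2 N
  S := S2 N
  val := v2 N
  R_trans := R2_trans N
  R_cwf := R2_cwf N
  S_trans := by
    rintro x y z u ⟨hxy, hxz, hc1⟩ ⟨-, hxu, hc2⟩
    refine ⟨hxy, hxu, ?_⟩
    rcases hc1 with rfl | hR1 | hP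
    · exact hc2
    · rcases hc2 with rfl | hR2 | hP
      · exact Or.inr (Or.inl hR1)
      · exact Or.inr (Or.inl (R2_trans N hR1 hR2))
      · exact Or.inr (Or.inr hP)
    · exact Or.inr (Or.inr hP)
  S_refl := fun x y h => ⟨h, h, Or.inl rfl⟩
  S_dom := fun x y z h => ⟨h.1, h.2.1⟩
  S_of_R := fun x y z h1 h2 => ⟨h1, R2_trans N h1 h2, Or.inr (Or.inl h2)⟩

end DagAux

/-- For every modal formula `A` in the language with `□` containing at most the
propositional variable `p`: `A` is valid in all `GL`-models (Kripke models
with a transitive and conversely well-founded accessibility relation) if and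
only if `A†` is valid in all Veltman models. -/
theorem GL_valid_iff_dag_veltman_valid (A : GLForm) (hA : A.onlyP) :
    (∀ (N : GLModel) (x : N.W), KSat N.R N.val x A) ↔
    (∀ (M : VeltmanModel) (x : M.W), ILSat M.R M.S M.val x (dag A)) := by

  constructor
  · intro h M x
    refine (transfer1 M A x).mpr ?_
    exact h { W := M.W, nonempty := M.nonempty,
              R := fun a b => M.R a b ∧ Deep M.R b,
              val := fun a _ => ILSat M.R M.S M.val a pDag,
              trans := fun _ _ _ hab hbc => ⟨M.R_trans hab.1 hbc.1, hbc.2⟩,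
              cwf := Subrelation.wf (fun h => h.1) M.R_cwf } x
  · intro h N x
    exact (transfer2 N A hA x).mp (h (M2 N) (x, 0))
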